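/- arXiv:1903.10413 — 3 statements merged into one kernel-verified Lean document; each statement's English description precedes it below -/
import Mathlib

section
/- Let n > m ≥ 1, l = lcm(n,m). Let α be a multiplicative character of k_n^× whose Frobenius orbit has size exactly n, and β a multiplicative character of k_m^× whose Frobenius orbit has size exactly m. Then for all 0 ≤ i < n and 0 ≤ j < m, the character of k_l^× given by x ↦ α(N_{k_l/k_n}(x)^{q^i})·β(N_{k_l/k_m}(x)^{q^j}) is nontrivial. -/
/-!
If the character were trivial, its `α`-factor would be the inverse of its `β`-factor. The latter
factors through `N_{k_l/k_m}`, whose values are fixed by `x ↦ x^{q^m}`, so the `α`-factor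
`α ∘ (·)^{q^i} ∘ N_{k_l/k_n}` is invariant under `x ↦ x^{q^m}` as well. Since the norm
`k_l^× → k_n^×` is surjective and `y ↦ y^{q^i}` is a bijection of `k_n^×`, the character `α`
itself is invariant under `y ↦ y^{q^m}`, contradicting that its Frobenius orbit has size `n > m`.
-/

namespace MonoidHom

variable {G H : Type*}

lemma comp_powMonoidHom [CommMonoid G] [CommMonoid H] (f : G →* H) (k : ℕ) :
    f.comp (powMonoidHom k) = (powMonoidHom k).comp f := by
  ext
  simp

lemma powMonoidHom_surjective_of_dvd [CommMonoid G] {N k : ℕ} (hN : ∀ y : G, y ^ N = y)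
    (hk : k ∣ N) : Function.Surjective (powMonoidHom k : G →* G) := by
  obtain ⟨r, rfl⟩ := hk
  exact fun y => ⟨y ^ r, by rw [powMonoidHom_apply, ← pow_mul, mul_comm, hN]⟩

lemma comp_eq_of_mul_eq_one_of_comp_eq [Group G] [CommGroup H] {χ ψ : G →* H} (h : χ * ψ = 1)
    {σ : G →* G} (hψ : ψ.comp σ = ψ) : χ.comp σ = χ := by
  rw [eq_inv_of_mul_eq_one_left h, inv_comp, hψ]

lemma comp_powMonoidHom_eq_of_comp_powMonoidHom_comp_eq [CommMonoid G] [CommMonoid H]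
    (χ : G →* H) {a b : ℕ} (ha : Function.Surjective (powMonoidHom a : G →* G))
    (h : (χ.comp (powMonoidHom a)).comp (powMonoidHom b) = χ.comp (powMonoidHom a)) :
    χ.comp (powMonoidHom b) = χ := by
  rwa [comp_assoc, comp_powMonoidHom (powMonoidHom a), ← comp_assoc, cancel_right ha] at h

end MonoidHom

namespace FiniteField

variable {K : Type*} [Field K] [Fintype K]

lemma units_pow_card (u : Kˣ) : u ^ Fintype.card K = u :=
  Units.ext (by rw [Units.val_pow_eq_pow_val, pow_card])

lemma powMonoidHom_card_comp {G : Type*} [Monoid G] (f : G →* Kˣ) :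
    (powMonoidHom (Fintype.card K)).comp f = f := by
  ext
  simp [units_pow_card]

end FiniteField

open MonoidHom FiniteField in
theorem stmt11_general (km kn kl : Type*) [Field km] [Field kn] [Field kl]
    [Fintype km] [Fintype kn] [Fintype kl]
    [Algebra km kl] [Algebra kn kl]
    (q n m : ℕ) (hnm : n > m) (hm1 : 1 ≤ m)
    (hqm : Fintype.card km = q ^ m) (hqn : Fintype.card kn = q ^ n)
    (α : knˣ →* ℂˣ) (hα : ∀ j : ℕ, 0 < j → j < n → α.comp (powMonoidHom (q ^ j)) ≠ α)
    (β : kmˣ →* ℂˣ) :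
    ∀ i < n, ∀ j < m,
      (α.comp (powMonoidHom (q ^ i))).comp (Units.map (Algebra.norm kn : kl →* kn)) *
        (β.comp (powMonoidHom (q ^ j))).comp (Units.map (Algebra.norm km : kl →* km)) ≠ 1 := by
  intro i hi j _ h
  set Nn := Units.map (Algebra.norm kn : kl →* kn)
  set Nm := Units.map (Algebra.norm km : kl →* km)
  have hβ_factor_invariant :
      ((β.comp (powMonoidHom (q ^ j))).comp Nm).comp (powMonoidHom (q ^ m)) =
        (β.comp (powMonoidHom (q ^ j))).comp Nm := by
    rw [MonoidHom.comp_assoc, comp_powMonoidHom Nm, ← hqm, powMonoidHom_card_comp]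
  have hα_factor_invariant := comp_eq_of_mul_eq_one_of_comp_eq h hβ_factor_invariant
  rw [MonoidHom.comp_assoc, comp_powMonoidHom Nn, ← MonoidHom.comp_assoc,
    cancel_right (unitsMap_norm_surjective kn kl)] at hα_factor_invariant
  have hpow_surjective : Function.Surjective (powMonoidHom (q ^ i) : knˣ →* knˣ) :=
    powMonoidHom_surjective_of_dvd (hqn ▸ units_pow_card) (pow_dvd_pow q hi.le)
  exact hα m hm1 hnm
    (comp_powMonoidHom_eq_of_comp_powMonoidHom_comp_eq α hpow_surjective hα_factor_invariant)

/-- for `n > m ≥ 1`, `l = lcm(n,m)`, `α` of orbit size `n`, `β` of orbit size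
`m`, the character `x ↦ α(N_{k_l/k_n}(x)^{q^i})·β(N_{k_l/k_m}(x)^{q^j})` of `k_l^×`
is nontrivial for all `0 ≤ i < n`, `0 ≤ j < m`. -/
theorem stmt11 (km kn kl : Type*) [Field km] [Field kn] [Field kl]
    [Fintype km] [Fintype kn] [Fintype kl]
    [Algebra km kl] [Algebra kn kl]
    (q n m l : ℕ) (hnm : n > m) (hm1 : 1 ≤ m) (hl : l = Nat.lcm n m)
    (hqm : Fintype.card km = q ^ m) (hqn : Fintype.card kn = q ^ n)
    (hql : Fintype.card kl = q ^ l)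
    (α : knˣ →* ℂˣ) (hα : ∀ j : ℕ, 0 < j → j < n → α.comp (powMonoidHom (q ^ j)) ≠ α)
    (β : kmˣ →* ℂˣ) (hβ : ∀ j : ℕ, 0 < j → j < m → β.comp (powMonoidHom (q ^ j)) ≠ β) :
    ∀ i < n, ∀ j < m,
      (α.comp (powMonoidHom (q ^ i))).comp (Units.map (Algebra.norm kn : kl →* kn)) *
        (β.comp (powMonoidHom (q ^ j))).comp (Units.map (Algebra.norm km : kl →* km)) ≠ 1 :=
  stmt11_general km kn kl q n m hnm hm1 hqm hqn α hα β
end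

section
/- Let n = 2m and let α be a multiplicative character of the finite field k_n of cardinality q^n such that α^{1+q^m} = 1 (the trivial character) and such that the Frobenius orbit of α has size exactly 2m (i.e., α^{q^j} ≠ α for 0 < j < 2m). Then for 0 ≤ i < j < 2m, the character α^{q^i + q^j} is trivial if and only if j = i + m. In particular there are exactly m such pairs (i,j). -/
/-!
Precomposition with the Frobenius `x ↦ x ^ q` is an endomorphism `φ` of the character group
with `φ^[k] α = α^{q^k}`, and `φ^[2m] = id` because `x ^ q ^ (2m) = x` on `k_nˣ`. The orbit
hypothesis says that `α` has minimal period exactly `2m` under `φ`, so `k ↦ φ^[k] α` is injective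
on `[0, 2m)`. Since `α^{q^m} = α⁻¹`, the relation `φ^[i] α * φ^[j] α = 1` reads
`φ^[j] α = φ^[i + m] α`, which for `i < j < 2m` forces `j = i + m`.
-/

open Function Finset

open scoped Classical

theorem Function.minimalPeriod_eq_of_forall_iterate_ne {α : Type*} {f : α → α} {x : α} {n : ℕ}
    (hn : 0 < n) (hper : IsPeriodicPt f n x) (hmin : ∀ j, 0 < j → j < n → f^[j] x ≠ x) :
    minimalPeriod f x = n := by
  refine (hper.minimalPeriod_le hn).antisymm (not_lt.mp fun hlt => ?_)
  exact hmin _ (hper.minimalPeriod_pos hn) hlt (isPeriodicPt_minimalPeriod f x)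

theorem MonoidHom.iterate_mul_iterate_eq_one_iff {C : Type*} [Group C] (f : C →* C) {a : C}
    {m : ℕ} (hper : IsPeriodicPt f (2 * m) a) (hmin : ∀ j, 0 < j → j < 2 * m → f^[j] a ≠ a)
    (ha : a * f^[m] a = 1) {i j : ℕ} (hij : i < j) (hj : j < 2 * m) :
    f^[i] a * f^[j] a = 1 ↔ j = i + m := by
  have hperiod : minimalPeriod f a = 2 * m :=
    minimalPeriod_eq_of_forall_iterate_ne (by omega) hper hmin
  have hmod : j = (i + m) % (2 * m) ↔ j = i + m := by
    rcases lt_or_ge (i + m) (2 * m) with h | h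
    · rw [Nat.mod_eq_of_lt h]
    · rw [Nat.mod_eq_sub_mod h, Nat.mod_eq_of_lt (by omega)]
      omega
  calc f^[i] a * f^[j] a = 1 ↔ f^[j] a = f^[i] a⁻¹ := by
        rw [mul_eq_one_iff_eq_inv', iterate_map_inv]
    _ ↔ f^[j] a = f^[(i + m) % (2 * m)] a := by
        rw [← eq_inv_of_mul_eq_one_right ha, ← iterate_add_apply, ← hperiod,
          iterate_mod_minimalPeriod_eq]
    _ ↔ j = i + m := by
        rw [iterate_eq_iterate_iff_of_lt_minimalPeriod (by omega)
          (by rw [hperiod]; exact Nat.mod_lt _ (by omega)), hmod]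

section FrobeniusTwist

variable {G H : Type*} [CommMonoid G] [CommMonoid H]

theorem MonoidHom.iterate_compHom'_powMonoidHom (q k : ℕ) (χ : G →* H) :
    (⇑((powMonoidHom q).compHom' : (G →* H) →* G →* H))^[k] χ = χ.comp (powMonoidHom (q ^ k)) := by
  induction k with
  | zero => ext x; simp
  | succ k ih =>
    ext x
    simp [iterate_succ_apply', ih, ← pow_mul, pow_succ']

theorem MonoidHom.isPeriodicPt_compHom'_powMonoidHom {q N : ℕ} (hG : ∀ x : G, x ^ q ^ N = x)
    (χ : G →* H) :
    IsPeriodicPt (⇑((powMonoidHom q).compHom' : (G →* H) →* G →* H)) N χ := by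
  rw [IsPeriodicPt, IsFixedPt, iterate_compHom'_powMonoidHom]
  ext x
  simp [hG]

end FrobeniusTwist

theorem FiniteField.units_pow_card_s12 {K : Type*} [Field K] [Fintype K] (x : Kˣ) :
    x ^ Fintype.card K = x :=
  Units.ext (by rw [Units.val_pow_eq_pow_val, FiniteField.pow_card])

theorem card_filter_lt_and_of_iff_eq_add (m : ℕ) (P : ℕ → ℕ → Prop) [DecidableRel P]
    (hP : ∀ i j, i < j → j < 2 * m → (P i j ↔ j = i + m)) :
    ((range (2 * m) ×ˢ range (2 * m)).filter (fun p => p.1 < p.2 ∧ P p.1 p.2)).card = m := by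
  have hset : (range (2 * m) ×ˢ range (2 * m)).filter (fun p => p.1 < p.2 ∧ P p.1 p.2)
      = (range m).image fun i => (i, i + m) := by
    ext ⟨a, b⟩
    simp only [mem_filter, mem_product, mem_range, mem_image, Prod.mk.injEq]
    constructor
    · rintro ⟨⟨ha, hb⟩, hab, hPab⟩
      obtain rfl := (hP a b hab hb).mp hPab
      exact ⟨a, by omega, rfl, rfl⟩
    · rintro ⟨i, hi, rfl, rfl⟩
      exact ⟨⟨by omega, by omega⟩, by omega, (hP i (i + m) (by omega) (by omega)).mpr rfl⟩
  rw [hset, card_image_of_injective _ fun a b h => (Prod.mk.inj h).1, card_range]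

theorem stmt12_general (K : Type*) [Field K] [Fintype K] (q m : ℕ)
    (hcard : Fintype.card K = q ^ (2 * m)) (α : Kˣ →* ℂˣ)
    (htriv : α * α.comp (powMonoidHom (q ^ m)) = 1)
    (horb : ∀ j : ℕ, 0 < j → j < 2 * m → α.comp (powMonoidHom (q ^ j)) ≠ α) :
    (∀ i j : ℕ, i < j → j < 2 * m →
      (α.comp (powMonoidHom (q ^ i)) * α.comp (powMonoidHom (q ^ j)) = 1 ↔ j = i + m)) ∧
    ((Finset.range (2 * m) ×ˢ Finset.range (2 * m)).filter
        (fun p => p.1 < p.2 ∧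
          α.comp (powMonoidHom (q ^ p.1)) * α.comp (powMonoidHom (q ^ p.2)) = 1)).card
      = m := by
  let φ : (Kˣ →* ℂˣ) →* Kˣ →* ℂˣ := (powMonoidHom q).compHom'
  have hφ (k : ℕ) : (⇑φ)^[k] α = α.comp (powMonoidHom (q ^ k)) :=
    MonoidHom.iterate_compHom'_powMonoidHom q k α
  have hper : IsPeriodicPt φ (2 * m) α :=
    MonoidHom.isPeriodicPt_compHom'_powMonoidHom
      (fun x => hcard ▸ FiniteField.units_pow_card_s12 x) α
  have hmin (j : ℕ) (hj0 : 0 < j) (hj : j < 2 * m) : (⇑φ)^[j] α ≠ α := hφ j ▸ horb j hj0 hj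
  have hα : α * (⇑φ)^[m] α = 1 := hφ m ▸ htriv
  have key (i j : ℕ) (hij : i < j) (hj : j < 2 * m) :
      α.comp (powMonoidHom (q ^ i)) * α.comp (powMonoidHom (q ^ j)) = 1 ↔ j = i + m := by
    rw [← hφ, ← hφ]
    exact φ.iterate_mul_iterate_eq_one_iff hper hmin hα hij hj
  exact ⟨key, card_filter_lt_and_of_iff_eq_add m _ key⟩

/-- for `n = 2m`, `α` with trivial `α^{1+q^m}` and Frobenius orbit of size
exactly `2m`, and `0 ≤ i < j < 2m`, the character `α^{q^i+q^j}` is trivial iff `j = i + m`;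
in particular there are exactly `m` such pairs. -/
theorem stmt12 (K : Type*) [Field K] [Fintype K] (q m : ℕ) (hm : 0 < m)
    (hcard : Fintype.card K = q ^ (2 * m)) (α : Kˣ →* ℂˣ)
    (htriv : α * α.comp (powMonoidHom (q ^ m)) = 1)
    (horb : ∀ j : ℕ, 0 < j → j < 2 * m → α.comp (powMonoidHom (q ^ j)) ≠ α) :
    (∀ i j : ℕ, i < j → j < 2 * m →
      (α.comp (powMonoidHom (q ^ i)) * α.comp (powMonoidHom (q ^ j)) = 1 ↔ j = i + m)) ∧
    ((Finset.range (2 * m) ×ˢ Finset.range (2 * m)).filter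
        (fun p => p.1 < p.2 ∧
          α.comp (powMonoidHom (q ^ p.1)) * α.comp (powMonoidHom (q ^ p.2)) = 1)).card
      = m :=
  stmt12_general K q m hcard α htriv horb
end

section
/- Let n, m be positive integers, d = gcd(n,m), l = lcm(n,m). Let α be a multiplicative character of k_n^× and β a multiplicative character of k_m^×, and lift them to characters of k_l^× via the norm maps. Then the multiset {α^{q^i}·β^{q^j} : 0 ≤ i < n, 0 ≤ j < m} of characters of k_l^× equals the union over δ = 0, …, d−1 of the multisets {(α·β^{q^δ})^{q^t} : 0 ≤ t < l}. -/
/-!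
Since `k_n` has `q^n` elements, `x ↦ x^{q^n}` is the identity on `k_n`; as the norm is
multiplicative, the twist `α^{q^i}` of the lifted character depends only on `i mod n`, and likewise
`β^{q^j}` only on `j mod m`. The term `(α·β^{q^δ})^{q^t}` on the right is `α^{q^t}·β^{q^{t+δ}}`,
so the theorem reduces to the fact that `(δ, t) ↦ (t mod n, (t + δ) mod m)` is a bijection
`[0,d) × [0,l) → [0,n) × [0,m)`: it is injective because `t + δ ≡ t' + δ' (mod m)` and
`t ≡ t' (mod n)` force `δ ≡ δ' (mod d)`, and then `t ≡ t' (mod l)`; both sides have `dl = nm`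
elements.
-/

open Finset

theorem FiniteField.pow_pow_eq_pow_pow_mod {K : Type*} [Field K] [Fintype K] {q n : ℕ}
    (h : Fintype.card K = q ^ n) (a : K) (i : ℕ) : a ^ q ^ i = a ^ q ^ (i % n) := by
  conv_lhs => rw [← Nat.mod_add_div i n, pow_add, pow_mul, pow_mul, ← h,
    FiniteField.pow_card_pow]

theorem MonoidHom.comp_powMonoidHom_pow_eq_pow_mod {G M K : Type*} [CommMonoid G] [Monoid M]
    [Field K] [Fintype K] {q n : ℕ} (h : Fintype.card K = q ^ n) (χ : Kˣ →* M) (f : G →* Kˣ)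
    (i : ℕ) :
    (χ.comp f).comp (powMonoidHom (q ^ i)) = (χ.comp f).comp (powMonoidHom (q ^ (i % n))) := by
  ext x
  simp only [MonoidHom.comp_apply, powMonoidHom_apply, map_pow f]
  have hx : f x ^ q ^ i = f x ^ q ^ (i % n) :=
    Units.ext (by simpa using FiniteField.pow_pow_eq_pow_pow_mod h (f x : K) i)
  rw [hx]

theorem injOn_mod_add_mod {n m : ℕ} :
    Set.InjOn (fun p : ℕ × ℕ => (p.2 % n, (p.2 + p.1) % m))
      (range (Nat.gcd n m) ×ˢ range (Nat.lcm n m) : Finset (ℕ × ℕ)) := by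
  rintro ⟨δ₁, t₁⟩ h₁ ⟨δ₂, t₂⟩ h₂ heq
  simp only [coe_product, coe_range, Set.mem_prod, Set.mem_Iio] at h₁ h₂
  simp only [Prod.mk.injEq] at heq
  have ht_n : t₁ ≡ t₂ [MOD n] := heq.1
  have hs_m : t₁ + δ₁ ≡ t₂ + δ₂ [MOD m] := heq.2
  have hδ : δ₁ = δ₂ :=
    ((ht_n.of_dvd (Nat.gcd_dvd_left n m)).add_left_cancel
      (hs_m.of_dvd (Nat.gcd_dvd_right n m))).eq_of_lt_of_lt h₁.1 h₂.1
  subst hδ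
  have ht_m : t₁ ≡ t₂ [MOD m] := hs_m.add_right_cancel' δ₁
  rw [(Nat.mod_lcm ht_n ht_m).eq_of_lt_of_lt h₁.2 h₂.2]

theorem map_mod_add_mod_range_product {n m : ℕ} (hn : 0 < n) (hm : 0 < m) :
    (range (Nat.gcd n m) ×ˢ range (Nat.lcm n m)).val.map
        (fun p => (p.2 % n, (p.2 + p.1) % m))
      = (range n ×ˢ range m).val := by
  rw [← image_val_of_injOn injOn_mod_add_mod]
  congr 1
  refine eq_of_subset_of_card_le ?_ ?_
  · intro p hp
    obtain ⟨⟨δ, t⟩, -, rfl⟩ := mem_image.mp hp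
    exact mem_product.mpr ⟨mem_range.mpr (Nat.mod_lt _ hn), mem_range.mpr (Nat.mod_lt _ hm)⟩
  · rw [card_image_of_injOn injOn_mod_add_mod, card_product, card_product, card_range,
      card_range, card_range, card_range, Nat.gcd_mul_lcm]

theorem stmt14_general (km kn kl : Type*) [Field km] [Field kn] [Field kl]
    [Fintype km] [Fintype kn] [Algebra km kl] [Algebra kn kl]
    (q n m d l : ℕ) (hn : 0 < n) (hm : 0 < m)
    (hd : d = Nat.gcd n m) (hl : l = Nat.lcm n m)
    (hqm : Fintype.card km = q ^ m) (hqn : Fintype.card kn = q ^ n)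
    (α : knˣ →* ℂˣ) (β : kmˣ →* ℂˣ) :
    ((Finset.range n ×ˢ Finset.range m)).val.map
        (fun p =>
          (α.comp (Units.map (Algebra.norm kn : kl →* kn))).comp (powMonoidHom (q ^ p.1)) *
          (β.comp (Units.map (Algebra.norm km : kl →* km))).comp (powMonoidHom (q ^ p.2)))
      = (Finset.range d).val.bind
          (fun δ => (Multiset.range l).map
            (fun t =>
              ((α.comp (Units.map (Algebra.norm kn : kl →* kn))) *
                (β.comp (Units.map (Algebra.norm km : kl →* km))).comp
                  (powMonoidHom (q ^ δ))).comp (powMonoidHom (q ^ t)))) := by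
  subst hd hl
  set A := α.comp (Units.map (Algebra.norm kn : kl →* kn))
  set B := β.comp (Units.map (Algebra.norm km : kl →* km))
  have hrhs : ∀ δ t, ((A * B.comp (powMonoidHom (q ^ δ))).comp (powMonoidHom (q ^ t))) =
      A.comp (powMonoidHom (q ^ t)) * B.comp (powMonoidHom (q ^ (t + δ))) := by
    intro δ t
    ext x
    simp only [MonoidHom.comp_apply, MonoidHom.mul_apply, powMonoidHom_apply, pow_add, pow_mul]
  simp only [hrhs]
  rw [← map_mod_add_mod_range_product hn hm, Multiset.map_map, product_val]
  simp only [SProd.sprod, Multiset.product, Multiset.map_bind, Multiset.map_map, range_val]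
  refine Multiset.bind_congr fun δ _ => Multiset.map_congr rfl fun t _ => ?_
  exact congr_arg₂ (· * ·) (α.comp_powMonoidHom_pow_eq_pow_mod hqn _ t).symm
    (β.comp_powMonoidHom_pow_eq_pow_mod hqm _ (t + δ)).symm

/-- with `α`, `β` lifted to `k_l^×` via the norm maps, the multiset
`{α^{q^i}·β^{q^j} : 0 ≤ i < n, 0 ≤ j < m}` equals the union over `δ ∈ [0,d)` of the
Frobenius-generated multisets `{(α·β^{q^δ})^{q^t} : 0 ≤ t < l}`. -/
theorem stmt14 (km kn kl : Type*) [Field km] [Field kn] [Field kl]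
    [Fintype km] [Fintype kn] [Fintype kl] [Algebra km kl] [Algebra kn kl]
    (q n m d l : ℕ) (hn : 0 < n) (hm : 0 < m)
    (hd : d = Nat.gcd n m) (hl : l = Nat.lcm n m)
    (hqm : Fintype.card km = q ^ m) (hqn : Fintype.card kn = q ^ n)
    (hql : Fintype.card kl = q ^ l)
    (α : knˣ →* ℂˣ) (β : kmˣ →* ℂˣ) :
    ((Finset.range n ×ˢ Finset.range m)).val.map
        (fun p =>
          (α.comp (Units.map (Algebra.norm kn : kl →* kn))).comp (powMonoidHom (q ^ p.1)) *
          (β.comp (Units.map (Algebra.norm km : kl →* km))).comp (powMonoidHom (q ^ p.2)))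
      = (Finset.range d).val.bind
          (fun δ => (Multiset.range l).map
            (fun t =>
              ((α.comp (Units.map (Algebra.norm kn : kl →* kn))) *
                (β.comp (Units.map (Algebra.norm km : kl →* km))).comp
                  (powMonoidHom (q ^ δ))).comp (powMonoidHom (q ^ t)))) :=
  stmt14_general km kn kl q n m d l hn hm hd hl hqm hqn α β
end
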